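/- arXiv:2601.16707 — 5 statements merged into one kernel-verified Lean document; each statement's English description precedes it below -/
import Mathlib

section
/- Let S ⊆ ℝ² be a bounded convex set with nonempty interior whose centroid is at the origin, and suppose S is balanced in the sense that x ∈ S implies -cx ∈ S for some constant c > 0. If K ⊆ S is convex and the half of S on one side of a hyperplane through the origin is contained in K, then |K| ≥ (c'/(1+c))·|S| for an explicit constant c' > 0 depending only on c. -/
open MeasureTheory Pointwise ENNReal

/-- If `S ⊆ ℝ²` is bounded convex with nonempty interior, centroid at the origin,
balanced with constant `c` (`x ∈ S → -c•x ∈ S`), and a convex `K ⊆ S` contains the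
half of `S` on one side of a hyperplane through the origin, then
`|K| ≥ (c'/(1+c))·|S|` with the explicit constant `c' = c²/(1+c)`. -/
theorem stmt4 (c : ℝ) (hc : 0 < c) (S K : Set (EuclideanSpace ℝ (Fin 2)))
    (hSconv : Convex ℝ S) (hSbdd : Bornology.IsBounded S)
    (hSint : (interior S).Nonempty)
    (hcent : (∫ x in S, x) = 0)
    (hbal : ∀ x ∈ S, -(c • x) ∈ S)
    (e : EuclideanSpace ℝ (Fin 2)) (he : ‖e‖ = 1)
    (hKconv : Convex ℝ K) (hKS : K ⊆ S)
    (hhalf : {x ∈ S | 0 ≤ (inner ℝ (x) (e) : ℝ)} ⊆ K) :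
    ENNReal.ofReal (c ^ 2 / (1 + c) / (1 + c)) * volume S ≤ volume K := by
  set Sn : Set (EuclideanSpace ℝ (Fin 2)) := {x ∈ S | (inner ℝ (x) (e) : ℝ) ≤ 0} with hSn
  -- the scaled negative half lands in K
  have hscale : (-c) • Sn ⊆ K := by
    rintro _ ⟨x, ⟨hxS, hxe⟩, rfl⟩
    apply hhalf
    refine ⟨by simpa [neg_smul] using hbal x hxS, ?_⟩
    rw [real_inner_smul_left]
    nlinarith
  have hvolSn : volume Sn ≤ ENNReal.ofReal (c ^ 2)⁻¹ * volume K := by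
    have h1 : volume ((-c) • Sn) = ENNReal.ofReal (|(-c)| ^ (2:ℕ)) * volume Sn := by
      have := MeasureTheory.Measure.addHaar_smul
        (volume : Measure (EuclideanSpace ℝ (Fin 2))) (-c) Sn
      simpa [finrank_euclideanSpace, Fintype.card_fin] using this
    have h2 : volume ((-c) • Sn) ≤ volume K := measure_mono hscale
    rw [h1] at h2
    have hc2 : (0:ℝ) < c ^ 2 := by positivity
    rw [abs_neg, abs_of_pos hc] at h2
    calc volume Sn = ENNReal.ofReal (c ^ 2)⁻¹ * (ENNReal.ofReal (c ^ 2) * volume Sn) := by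
          rw [← mul_assoc, ← ENNReal.ofReal_mul (by positivity),
            inv_mul_cancel₀ (ne_of_gt hc2), ENNReal.ofReal_one, one_mul]
      _ ≤ ENNReal.ofReal (c ^ 2)⁻¹ * volume K := by
          exact mul_le_mul_right h2 _
  have hcover : volume S ≤ volume K + volume Sn := by
    have : S ⊆ {x ∈ S | 0 ≤ (inner ℝ (x) (e) : ℝ)} ∪ Sn := by
      intro x hx
      rcases le_total 0 (inner ℝ x e : ℝ) with h | h
      · exact Or.inl ⟨hx, h⟩
      · exact Or.inr ⟨hx, h⟩
    calc volume S ≤ volume ({x ∈ S | 0 ≤ (inner ℝ (x) (e) : ℝ)} ∪ Sn) := measure_mono this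
      _ ≤ volume {x ∈ S | 0 ≤ (inner ℝ (x) (e) : ℝ)} + volume Sn := measure_union_le _ _
      _ ≤ volume K + volume Sn := add_le_add_left (measure_mono hhalf) _
  have key : volume S ≤ (1 + ENNReal.ofReal (c ^ 2)⁻¹) * volume K := by
    rw [add_mul, one_mul]
    exact hcover.trans (by gcongr)
  calc ENNReal.ofReal (c ^ 2 / (1 + c) / (1 + c)) * volume S
      ≤ ENNReal.ofReal (c ^ 2 / (1 + c) / (1 + c)) *
        ((1 + ENNReal.ofReal (c ^ 2)⁻¹) * volume K) := mul_le_mul_right key _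
    _ = (ENNReal.ofReal (c ^ 2 / (1 + c) / (1 + c)) * (1 + ENNReal.ofReal (c ^ 2)⁻¹))
        * volume K := by ring
    _ ≤ 1 * volume K := by
        gcongr
        have h1 : (1:ENNReal) + ENNReal.ofReal (c ^ 2)⁻¹ = ENNReal.ofReal (1 + (c ^ 2)⁻¹) := by
          rw [ENNReal.ofReal_add (by norm_num) (by positivity), ENNReal.ofReal_one]
        rw [h1, ← ENNReal.ofReal_mul (by positivity)]
        apply ENNReal.ofReal_le_one.mpr
        rw [div_div, div_mul_eq_mul_div, div_le_one (by nlinarith)]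
        have : c ^ 2 * (1 + (c ^ 2)⁻¹) = c ^ 2 + 1 := by
          field_simp
        rw [this]; nlinarith
    _ = volume K := one_mul _
end

section
/- There is no convex function u on a ball B_r(x₀) ⊆ ℝ² that is affine on the diameter segment {x ∈ B_r(x₀) : ⟪x - x₀, e⟫ = 0} and whose Monge–Ampère measure satisfies det D²u ≥ c·χ_{⟪x-x₀,e⟫>0} in the Alexandrov sense for some constant c > 0. Concretely: if u : B_r(x₀) → ℝ is convex, u restricted to the segment {⟪x-x₀,e⟫ = 0} ∩ B_r(x₀) is affine, then the Monge–Ampère measure of u of the half ball {x ∈ B_{r/2}(x₀) : 0 < ⟪x-x₀,e⟫ < δ} tends to 0 faster than its Lebesgue measure as δ → 0, contradicting the lower bound. -/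
open MeasureTheory RealInnerProductSpace

section Aux

theorem MR_einner (x y : EuclideanSpace ℝ (Fin 2)) : ⟪x, y⟫ = x 0 * y 0 + x 1 * y 1 := by
  simp [PiLp.inner_apply, Fin.sum_univ_two, RCLike.inner_apply]; ring

theorem MR_esum (e : EuclideanSpace ℝ (Fin 2)) (he : ‖e‖ = 1) : e 0 ^2 + e 1 ^2 = 1 := by
  have h2 : Real.sqrt (∑ i : Fin 2, ‖e i‖ ^ 2) = 1 := by rw [← EuclideanSpace.norm_eq]; exact he
  have hnn : 0 ≤ ∑ i : Fin 2, ‖e i‖ ^2 := Finset.sum_nonneg fun i _ => sq_nonneg _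
  have h3 : (∑ i : Fin 2, ‖e i‖ ^ 2) = 1 := by nlinarith [Real.sq_sqrt hnn, h2]
  simpa [Fin.sum_univ_two, Real.norm_eq_abs, sq_abs] using h3

noncomputable def MRff (e : EuclideanSpace ℝ (Fin 2)) : EuclideanSpace ℝ (Fin 2) := !₂[-(e 1), e 0]

theorem MRff0 (e : EuclideanSpace ℝ (Fin 2)) : MRff e 0 = -(e 1) := rfl
theorem MRff1 (e : EuclideanSpace ℝ (Fin 2)) : MRff e 1 = e 0 := rfl

theorem MR_decompE (e : EuclideanSpace ℝ (Fin 2)) (he : ‖e‖ = 1) (y : EuclideanSpace ℝ (Fin 2)) :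
    y = ⟪MRff e, y⟫ • MRff e + ⟪e, y⟫ • e := by
  have h := MR_esum e he
  ext i
  fin_cases i
  · simp only [MR_einner, PiLp.add_apply, PiLp.smul_apply, smul_eq_mul, Fin.mk_zero, Fin.mk_one,
      MRff0, MRff1]
    linear_combination (-(y 0)) * h
  · simp only [MR_einner, PiLp.add_apply, PiLp.smul_apply, smul_eq_mul, Fin.mk_zero, Fin.mk_one,
      MRff0, MRff1]
    linear_combination (-(y 1)) * h

theorem MR_hff (e : EuclideanSpace ℝ (Fin 2)) (he : ‖e‖ = 1) : ⟪MRff e, MRff e⟫ = (1:ℝ) := by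
  have h := MR_esum e he; simp [-inner_self_eq_norm_sq_to_K, MR_einner, MRff0, MRff1]; nlinarith
theorem MR_hfe (e : EuclideanSpace ℝ (Fin 2)) : ⟪MRff e, e⟫ = (0:ℝ)  := by
  simp [MR_einner, MRff0, MRff1]; ring
theorem MR_hee (e : EuclideanSpace ℝ (Fin 2)) (he : ‖e‖ = 1) : ⟪e, e⟫ = (1:ℝ) := by
  have h := MR_esum e he; simp [-inner_self_eq_norm_sq_to_K, MR_einner]; nlinarith

theorem MR_orth (e : EuclideanSpace ℝ (Fin 2)) (he : ‖e‖ = 1) : Orthonormal ℝ ![MRff e, e] := by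
  rw [orthonormal_iff_ite]
  intro i j
  have h := MR_esum e he
  fin_cases i <;> fin_cases j <;> simp [-inner_self_eq_norm_sq_to_K, MR_einner, MRff0, MRff1] <;> nlinarith [h]

theorem MR_comb (x₀ f e : EuclideanSpace ℝ (Fin 2)) (α s₁ t₁ s₂ t₂ : ℝ) :
    α • (x₀ + (s₁ • f + t₁ • e)) + (1-α) • (x₀ + (s₂ • f + t₂ • e))
      = x₀ + ((α*s₁+(1-α)*s₂) • f + (α*t₁+(1-α)*t₂) • e) := by
  module

theorem MR_comb' (x₀ f e : EuclideanSpace ℝ (Fin 2)) (α s₁ t₁ s₂ t₂ s t : ℝ)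
    (h1 : α*s₁+(1-α)*s₂ = s) (h2 : α*t₁+(1-α)*t₂ = t) :
    α • (x₀ + (s₁ • f + t₁ • e)) + (1-α) • (x₀ + (s₂ • f + t₂ • e))
      = x₀ + (s • f + t • e) := by
  subst h1; subst h2; module

theorem MR_coordF (x₀ f e : EuclideanSpace ℝ (Fin 2)) (s t : ℝ)
    (hff : ⟪f, f⟫ = (1:ℝ)) (hfe : ⟪f, e⟫ = (0:ℝ)) :
    ⟪f, (x₀ + (s • f + t • e)) - x₀⟫ = s := by
  rw [add_sub_cancel_left, inner_add_right, real_inner_smul_right, real_inner_smul_right,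
    hff, hfe]
  ring

theorem MR_coordE (x₀ f e : EuclideanSpace ℝ (Fin 2)) (s t : ℝ)
    (hee : ⟪e, e⟫ = (1:ℝ)) (hef : ⟪e, f⟫ = (0:ℝ)) :
    ⟪e, (x₀ + (s • f + t • e)) - x₀⟫ = t := by
  rw [add_sub_cancel_left, inner_add_right, real_inner_smul_right, real_inner_smul_right,
    hee, hef]
  ring

theorem MR_normsq (f e : EuclideanSpace ℝ (Fin 2)) (s t : ℝ)
    (hff : ⟪f, f⟫ = (1:ℝ)) (hfe : ⟪f, e⟫ = (0:ℝ)) (hee : ⟪e, e⟫ = (1:ℝ)) :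
    ‖s • f + t • e‖ ^ 2 = s^2 + t^2 := by
  have hef : ⟪e, f⟫ = (0:ℝ) := by rw [real_inner_comm]; exact hfe
  rw [← real_inner_self_eq_norm_sq]
  rw [inner_add_left, inner_add_right, inner_add_right]
  rw [real_inner_smul_left, real_inner_smul_left, real_inner_smul_left, real_inner_smul_left,
    real_inner_smul_right, real_inner_smul_right, real_inner_smul_right, real_inner_smul_right]
  rw [hff, hee, hfe, hef]
  ring

noncomputable def MRonb (f e : EuclideanSpace ℝ (Fin 2)) (h : Orthonormal ℝ ![f, e]) :
    OrthonormalBasis (Fin 2) ℝ (EuclideanSpace ℝ (Fin 2)) :=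
  (basisOfOrthonormalOfCardEqFinrank h (by simp)).toOrthonormalBasis
    (by rwa [coe_basisOfOrthonormalOfCardEqFinrank])

theorem MR_volBox (f e : EuclideanSpace ℝ (Fin 2)) (h : Orthonormal ℝ ![f, e]) (A B : Set ℝ)
    (hA : MeasurableSet A) (hB : MeasurableSet B) :
    volume {x : EuclideanSpace ℝ (Fin 2) | (⟪f, x⟫ : ℝ) ∈ A ∧ (⟪e, x⟫ : ℝ) ∈ B}
      = volume A * volume B := by
  set b := MRonb f e h with hb
  have h0 : b 0 = f := by
    show (⇑(MRonb f e h)) _ = _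
    rw [MRonb, Module.Basis.coe_toOrthonormalBasis, coe_basisOfOrthonormalOfCardEqFinrank]; simp
  have h1 : b 1 = e := by
    show (⇑(MRonb f e h)) _ = _
    rw [MRonb, Module.Basis.coe_toOrthonormalBasis, coe_basisOfOrthonormalOfCardEqFinrank]; simp
  have hset : {x : EuclideanSpace ℝ (Fin 2) | (⟪f, x⟫ : ℝ) ∈ A ∧ (⟪e, x⟫ : ℝ) ∈ B}
      = b.repr ⁻¹' {q : EuclideanSpace ℝ (Fin 2) | q 0 ∈ A ∧ q 1 ∈ B} := by
    ext x
    simp only [Set.mem_setOf_eq, Set.mem_preimage, b.repr_apply_apply, h0, h1]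
  rw [hset]
  have hq : {q : EuclideanSpace ℝ (Fin 2) | q 0 ∈ A ∧ q 1 ∈ B}
      = (MeasurableEquiv.toLp 2 (Fin 2 → ℝ)).symm ⁻¹' (Set.pi Set.univ ![A, B]) := by
    ext q
    simp [Set.mem_pi, Fin.forall_fin_two, MeasurableEquiv.toLp, MeasurableEquiv.symm]
  have hmeas : MeasurableSet (Set.pi Set.univ ![A, B]) := by
    apply MeasurableSet.univ_pi
    intro i; fin_cases i <;> simpa
  calc volume (b.repr ⁻¹' {q : EuclideanSpace ℝ (Fin 2) | q 0 ∈ A ∧ q 1 ∈ B})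
      = volume {q : EuclideanSpace ℝ (Fin 2) | q 0 ∈ A ∧ q 1 ∈ B} := by
        apply b.measurePreserving_repr.measure_preimage
        rw [hq]
        exact ((MeasurableEquiv.toLp 2 (Fin 2 → ℝ)).symm.measurable hmeas).nullMeasurableSet
    _ = volume (Set.pi Set.univ ![A, B]) := by
        rw [hq]
        exact (EuclideanSpace.volume_preserving_symm_measurableEquiv_toLp (Fin 2)).measure_preimage
          hmeas.nullMeasurableSet
    _ = volume A * volume B := by
        rw [volume_pi_pi]
        simp [Fin.prod_univ_two]

theorem MR_volBox' (f e : EuclideanSpace ℝ (Fin 2)) (h : Orthonormal ℝ ![f, e])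
    (y : EuclideanSpace ℝ (Fin 2)) (A B : Set ℝ)
    (hA : MeasurableSet A) (hB : MeasurableSet B) :
    volume {x : EuclideanSpace ℝ (Fin 2) | (⟪f, x - y⟫ : ℝ) ∈ A ∧ (⟪e, x - y⟫ : ℝ) ∈ B}
      = volume A * volume B := by
  have hset : {x : EuclideanSpace ℝ (Fin 2) | (⟪f, x - y⟫ : ℝ) ∈ A ∧ (⟪e, x - y⟫ : ℝ) ∈ B}
      = (fun x => x + -y) ⁻¹' {x : EuclideanSpace ℝ (Fin 2) | (⟪f, x⟫ : ℝ) ∈ A ∧ (⟪e, x⟫ : ℝ) ∈ B} := by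
    ext x; simp [sub_eq_add_neg]
  rw [hset, measure_preimage_add_right, MR_volBox f e h A B hA hB]

end Aux

set_option maxHeartbeats 4000000 in
/-- (Mooney–Rakshit, Lemma 6.1) There is no convex function `u` on a ball
`B_r(x₀) ⊆ ℝ²` that is affine on the diameter segment `{⟪x - x₀, e⟫ = 0}` and whose
Monge–Ampère measure satisfies `det D²u ≥ c·χ_{⟪x-x₀,e⟫>0}` in the Alexandrov sense. -/
theorem stmt6 (x₀ : EuclideanSpace ℝ (Fin 2)) (r : ℝ) (hr : 0 < r)
    (e : EuclideanSpace ℝ (Fin 2)) (he : ‖e‖ = 1) (c : ℝ) (hc : 0 < c) :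
    ¬ ∃ u : EuclideanSpace ℝ (Fin 2) → ℝ,
      ConvexOn ℝ (Metric.ball x₀ r) u ∧
      (∃ (a : EuclideanSpace ℝ (Fin 2)) (b : ℝ), ∀ x ∈ Metric.ball x₀ r,
        (inner ℝ (x - x₀) (e) : ℝ) = 0 → u x = (inner ℝ (a) (x) : ℝ) + b) ∧
      (∀ E ⊆ Metric.ball x₀ r, MeasurableSet E →
        ENNReal.ofReal c * volume (E ∩ {x | 0 < (inner ℝ (x - x₀) (e) : ℝ)}) ≤
          volume {p : EuclideanSpace ℝ (Fin 2) |
            ∃ x ∈ E, ∀ z ∈ Metric.ball x₀ r, u x + (inner ℝ (p) (z - x) : ℝ) ≤ u z}) := by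
  rintro ⟨u, hu, ⟨a, b, haff⟩, H⟩
  set f : EuclideanSpace ℝ (Fin 2) := MRff e with hfdef
  have hff : ⟪f, f⟫ = (1:ℝ) := MR_hff e he
  have hfe : ⟪f, e⟫ = (0:ℝ) := MR_hfe e
  have hee : ⟪e, e⟫ = (1:ℝ) := MR_hee e he
  have hef : ⟪e, f⟫ = (0:ℝ) := by rw [real_inner_comm]; exact hfe
  set X : ℝ → ℝ → EuclideanSpace ℝ (Fin 2) := fun s t => x₀ + (s • f + t • e) with hX
  have memX : ∀ s t : ℝ, s^2 + t^2 < r^2 → X s t ∈ Metric.ball x₀ r := by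
    intro s t h
    rw [Metric.mem_ball, dist_eq_norm]
    have h1 : X s t - x₀ = s • f + t • e := by simp only [hX]; abel
    rw [h1]
    have h2 := MR_normsq f e s t hff hfe hee
    nlinarith [norm_nonneg (s • f + t • e), hr]
  have decomp : ∀ x : EuclideanSpace ℝ (Fin 2), x = X ⟪f, x - x₀⟫ ⟪e, x - x₀⟫ := by
    intro x
    have h1 := MR_decompE e he (x - x₀)
    rw [← hfdef] at h1
    simp only [hX]
    rw [← h1]
    abel
  -- the normalized function v, vanishing on the diameter
  set v : EuclideanSpace ℝ (Fin 2) → ℝ := fun x => u x - ((inner ℝ a x : ℝ) + b) with hv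
  have hv0 : ∀ s : ℝ, s^2 < r^2 → v (X s 0) = 0 := by
    intro s hs
    have hb : X s 0 ∈ Metric.ball x₀ r := memX s 0 (by nlinarith)
    have hco : X s 0 - x₀ = s • f + (0:ℝ) • e := by simp only [hX]; abel
    have h1 : (inner ℝ (X s 0 - x₀) e : ℝ) = 0 := by
      rw [real_inner_comm, hco]
      rw [inner_add_right, real_inner_smul_right, real_inner_smul_right, hef, hee]
      ring
    have h2 := haff (X s 0) hb h1
    simp only [hv]
    rw [h2]; ring
  have hvc : ∀ x ∈ Metric.ball x₀ r, ∀ y ∈ Metric.ball x₀ r, ∀ α β : ℝ, 0 ≤ α → 0 ≤ β →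
      α + β = 1 → v (α • x + β • y) ≤ α * v x + β * v y := by
    intro x hx y hy α β hα hβ hαβ
    have h1 := hu.2 hx hy hα hβ hαβ
    rw [smul_eq_mul, smul_eq_mul] at h1
    have h2 : (inner ℝ a (α • x + β • y) : ℝ) = α * (inner ℝ a x : ℝ) + β * (inner ℝ a y : ℝ) := by
      rw [inner_add_right, real_inner_smul_right, real_inner_smul_right]
    have hb : α * b + β * b = b := by rw [← add_mul, hαβ, one_mul]
    simp only [hv]
    linarith
  -- the slope function along e
  set φ : ℝ → ℝ := fun τ => v (X 0 τ) / τ with hφ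
  set M : ℝ := v (X 0 (-(r/2))) with hM
  have hK : ∀ τ : ℝ, 0 < τ → τ < r/2 → -M/(r/2) ≤ φ τ := by
    intro τ h0 h2
    set D : ℝ := τ + r/2 with hD
    have hDpos : 0 < D := by rw [hD]; linarith
    have hDne : D ≠ 0 := hDpos.ne'
    have hcomb : ((r/2)/D) • (X 0 τ) + (1 - (r/2)/D) • (X 0 (-(r/2))) = X 0 0 := by
      simp only [hX]
      exact MR_comb' x₀ f e ((r/2)/D) 0 τ 0 (-(r/2)) 0 0 (by ring) (by field_simp; ring)
    have hmem1 : X 0 τ ∈ Metric.ball x₀ r := memX 0 τ (by nlinarith)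
    have hmem2 : X 0 (-(r/2)) ∈ Metric.ball x₀ r := memX 0 (-(r/2)) (by nlinarith)
    have hw1 : (0:ℝ) ≤ (r/2)/D := by positivity
    have hw2 : (0:ℝ) ≤ 1 - (r/2)/D := by
      rw [sub_nonneg, div_le_one hDpos]; linarith
    have hconv := hvc _ hmem1 _ hmem2 ((r/2)/D) (1 - (r/2)/D) hw1 hw2 (by ring)
    rw [hcomb, hv0 0 (by nlinarith)] at hconv
    have hw2' : 1 - (r/2)/D = τ/D := by field_simp; rw [hD]; ring
    rw [hw2'] at hconv
    have hmul : ((r/2)/D * v (X 0 τ) + τ/D * M) * D = (r/2) * v (X 0 τ) + τ * M := by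
      field_simp
    have h3 : 0 ≤ (r/2) * v (X 0 τ) + τ * M := by
      rw [← hmul]
      exact mul_nonneg (by linarith) hDpos.le
    simp only [hφ]
    rw [div_le_div_iff₀ (by linarith : (0:ℝ) < r/2) h0]
    linarith
  have hne : (φ '' Set.Ioo 0 (r/2)).Nonempty :=
    ⟨φ (r/4), Set.mem_image_of_mem _ ⟨by positivity, by linarith⟩⟩
  have hbdd : BddBelow (φ '' Set.Ioo 0 (r/2)) := by
    refine ⟨-M/(r/2), ?_⟩
    rintro y ⟨τ, hτ, rfl⟩
    exact hK τ hτ.1 hτ.2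
  set G : ℝ := sInf (φ '' Set.Ioo 0 (r/2)) with hG
  have hGle : ∀ τ : ℝ, 0 < τ → τ < r/2 → G ≤ φ τ := fun τ h1 h2 =>
    csInf_le hbdd (Set.mem_image_of_mem _ ⟨h1, h2⟩)
  have horth : Orthonormal ℝ ![f, e] := by rw [hfdef]; exact MR_orth e he
  clear_value f X v φ M G
  -- key lower bound : v (X s t) ≥ G * t for t > 0
  have lower5 : ∀ s t : ℝ, s^2 + t^2 < r^2 → 0 < t → G * t ≤ v (X s t) := by
    intro s t hmem ht
    have hcomb : (1/2 : ℝ) • (X s t) + (1 - 1/2 : ℝ) • (X (-s) 0) = X 0 (t/2) := by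
      simp only [hX]
      exact MR_comb' x₀ f e (1/2) s t (-s) 0 0 (t/2) (by ring) (by ring)
    have hmem1 : X s t ∈ Metric.ball x₀ r := memX s t hmem
    have hmem2 : X (-s) 0 ∈ Metric.ball x₀ r := memX (-s) 0 (by nlinarith)
    have hconv := hvc _ hmem1 _ hmem2 (1/2) (1 - 1/2) (by norm_num) (by norm_num) (by norm_num)
    rw [hcomb, hv0 (-s) (by nlinarith)] at hconv
    have ht2 : (0:ℝ) < t/2 := by linarith
    have htr : t < r := by nlinarith
    have hG2 := hGle (t/2) ht2 (by linarith)
    simp only [hφ] at hG2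
    rw [le_div_iff₀ ht2] at hG2
    nlinarith
  -- choose ε and T
  set ε : ℝ := r * Real.sqrt c / 16 with hε
  have hsq : Real.sqrt c ^ 2 = c := Real.sq_sqrt hc.le
  have hsqpos : 0 < Real.sqrt c := Real.sqrt_pos.mpr hc
  have hεpos : 0 < ε := by rw [hε]; positivity
  obtain ⟨y, hy, hylt⟩ := exists_lt_of_csInf_lt hne (show sInf (φ '' Set.Ioo 0 (r/2)) < G + ε by rw [← hG]; linarith)
  obtain ⟨T, hT, rfl⟩ := hy
  have hT0 : 0 < T := hT.1
  have hTr : T < r/2 := hT.2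
  -- uniform upper bound near the diameter (from convexity through a single point on the e-axis)
  have upperA : ∀ s t : ℝ, |s| ≤ r/2 → 0 < t → t ≤ T/4 → v (X s t) ≤ (G + ε) * t := by
    intro s t hs ht htT
    set lam : ℝ := t/T with hlam
    have hlam0 : 0 < lam := by rw [hlam]; positivity
    have hlam4 : lam ≤ 1/4 := by rw [hlam, div_le_iff₀ hT0]; linarith
    have h1lamne : (1:ℝ) - lam ≠ 0 := by norm_num; linarith
    set y' : ℝ := s / (1 - lam) with hy'
    have hy'bound : |y'| ≤ (2/3) * r := by
      rw [hy', abs_div, abs_of_pos (by linarith : (0:ℝ) < 1 - lam)]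
      rw [div_le_iff₀ (by linarith : (0:ℝ) < 1 - lam)]
      have := abs_nonneg s
      nlinarith
    have hcomb : lam • (X 0 T) + (1 - lam) • (X y' 0) = X s t := by
      simp only [hX]
      refine MR_comb' x₀ f e lam 0 T y' 0 s t ?_ ?_
      · rw [hy']; field_simp; ring
      · rw [hlam]; field_simp; ring
    have hmem1 : X 0 T ∈ Metric.ball x₀ r := memX 0 T (by nlinarith)
    have hmem2 : X y' 0 ∈ Metric.ball x₀ r := by
      apply memX
      nlinarith [sq_abs y', abs_nonneg y', hy'bound]
    have hconv := hvc _ hmem1 _ hmem2 lam (1 - lam) hlam0.le (by linarith) (by ring)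
    rw [hcomb, hv0 y' (by nlinarith [sq_abs y', abs_nonneg y', hy'bound])] at hconv
    have hphiT : v (X 0 T) = φ T * T := by
      simp only [hφ]
      rw [div_mul_cancel₀ _ hT0.ne']
    have hlamT : lam * T = t := by rw [hlam]; field_simp
    calc v (X s t) ≤ lam * v (X 0 T) + (1 - lam) * 0 := hconv
    _ = lam * (φ T * T) := by rw [hphiT]; ring
    _ = φ T * t := by rw [← hlamT]; ring
    _ ≤ (G + ε) * t := by nlinarith [hylt]
  -- the thin strip
  set δ : ℝ := T/8 with hδdef
  have hδ : 0 < δ := by rw [hδdef]; linarith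
  have hδr : δ < r/16 := by rw [hδdef]; linarith
  set Eset : Set (EuclideanSpace ℝ (Fin 2)) :=
    {x | ⟪f, x - x₀⟫ ∈ Set.Icc (-(r/4)) (r/4) ∧ ⟪e, x - x₀⟫ ∈ Set.Ioo 0 δ} with hEset
  have hEb : Eset ⊆ Metric.ball x₀ r := by
    intro x hx
    obtain ⟨hx1, hx2⟩ := hx
    rw [Set.mem_Icc] at hx1
    rw [Set.mem_Ioo] at hx2
    rw [decomp x]
    apply memX
    nlinarith [hx1.1, hx1.2, hx2.1, hx2.2]
  have hEm : MeasurableSet Eset := by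
    have hcont1 : Continuous fun x : EuclideanSpace ℝ (Fin 2) => (⟪f, x - x₀⟫ : ℝ) :=
      Continuous.inner continuous_const (continuous_id.sub continuous_const)
    have hcont2 : Continuous fun x : EuclideanSpace ℝ (Fin 2) => (⟪e, x - x₀⟫ : ℝ) :=
      Continuous.inner continuous_const (continuous_id.sub continuous_const)
    exact (hcont1.measurable measurableSet_Icc).inter (hcont2.measurable measurableSet_Ioo)
  have hEpos : Eset ∩ {x | 0 < (inner ℝ (x - x₀) e : ℝ)} = Eset := by
    apply Set.inter_eq_self_of_subset_left
    intro x hx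
    have h1 := hx.2.1
    show 0 < (inner ℝ (x - x₀) e : ℝ)
    rw [real_inner_comm]
    exact h1
  have volE : volume Eset = ENNReal.ofReal (r/2) * ENNReal.ofReal δ := by
    rw [hEset, MR_volBox' f e horth x₀ _ _ measurableSet_Icc measurableSet_Ioo]
    rw [Real.volume_Icc, Real.volume_Ioo]
    congr 2 <;> ring
  -- the subdifferential image is contained in a thin box
  set aG : EuclideanSpace ℝ (Fin 2) := a + G • e with haG
  set Box : Set (EuclideanSpace ℝ (Fin 2)) :=
    {p | ⟪f, p - aG⟫ ∈ Set.Icc (-(8*ε*δ/r)) (8*ε*δ/r) ∧ ⟪e, p - aG⟫ ∈ Set.Icc 0 (2*ε)} with hBox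
  have hsub : {p : EuclideanSpace ℝ (Fin 2) |
      ∃ x ∈ Eset, ∀ z ∈ Metric.ball x₀ r, u x + (inner ℝ p (z - x) : ℝ) ≤ u z} ⊆ Box := by
    rintro p ⟨x, hxE, hp⟩
    obtain ⟨hx1, hx2⟩ := hxE
    set s : ℝ := ⟪f, x - x₀⟫ with hs
    set t : ℝ := ⟪e, x - x₀⟫ with ht
    rw [Set.mem_Icc] at hx1
    rw [Set.mem_Ioo] at hx2
    have hxX : x = X s t := decomp x
    -- subgradient inequality for v
    have hq : ∀ z ∈ Metric.ball x₀ r, (⟪p - a, z - x⟫ : ℝ) ≤ v z - v x := by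
      intro z hz
      have h1 := hp z hz
      have h2 : (⟪p - a, z - x⟫ : ℝ)
          = (inner ℝ p (z - x) : ℝ) - ((inner ℝ a z : ℝ) - (inner ℝ a x : ℝ)) := by
        rw [inner_sub_left, inner_sub_right, inner_sub_right]
      simp only [hv]
      linarith
    set ipf : ℝ := ⟪p - a, f⟫ with hipf
    set ipe : ℝ := ⟪p - a, e⟫ with hipe
    have hs2 : s^2 < r^2 := by nlinarith [hx1.1, hx1.2]
    have hst2 : s^2 + t^2 < r^2 := by nlinarith [hx1.1, hx1.2, hx2.1, hx2.2]
    have hvlow : G * t ≤ v x := by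
      rw [hxX]; exact lower5 s t hst2 hx2.1
    -- z₁ : drop to the diameter
    have hz1mem : X s 0 ∈ Metric.ball x₀ r := memX s 0 (by nlinarith)
    have hz1diff : X s 0 - x = (-t) • e := by
      rw [hxX]; simp only [hX]; module
    have h1 : -t * ipe ≤ -(G * t) := by
      have hh := hq (X s 0) hz1mem
      rw [hz1diff, real_inner_smul_right, hv0 s hs2] at hh
      linarith
    have hipeG : G ≤ ipe := by
      have h2 : G * t ≤ ipe * t := by nlinarith
      exact le_of_mul_le_mul_right h2 hx2.1
    -- z₂ : double the height
    have ht4 : t < T/8 := by rw [← hδdef]; exact hx2.2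
    have hz2mem : X s (2*t) ∈ Metric.ball x₀ r := by
      apply memX
      nlinarith [hx1.1, hx1.2, hx2.1, ht4]
    have hz2diff : X s (2*t) - x = t • e := by
      rw [hxX]; simp only [hX]; module
    have hup2 : v (X s (2*t)) ≤ (G + ε) * (2*t) := by
      apply upperA s (2*t) _ (by linarith [hx2.1]) (by linarith)
      rw [abs_le]; constructor <;> linarith [hx1.1, hx1.2]
    have h2 : t * ipe ≤ (G + ε) * (2*t) - G * t := by
      have hh := hq (X s (2*t)) hz2mem
      rw [hz2diff, real_inner_smul_right] at hh
      linarith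
    have hipe2 : ipe ≤ G + 2*ε := by
      have h3 : ipe * t ≤ (G + 2*ε) * t := by nlinarith
      exact le_of_mul_le_mul_right h3 hx2.1
    -- z₃ , z₄ : move along the diameter
    have hz3mem : X (s + r/4) 0 ∈ Metric.ball x₀ r := by
      apply memX; nlinarith [hx1.1, hx1.2]
    have hz4mem : X (s - r/4) 0 ∈ Metric.ball x₀ r := by
      apply memX; nlinarith [hx1.1, hx1.2]
    have hz3diff : X (s + r/4) 0 - x = (r/4) • f + (-t) • e := by
      rw [hxX]; simp only [hX]; module
    have hz4diff : X (s - r/4) 0 - x = (-(r/4)) • f + (-t) • e := by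
      rw [hxX]; simp only [hX]; module
    have h3 : (r/4) * ipf + (-t) * ipe ≤ -(G * t) := by
      have hh := hq (X (s + r/4) 0) hz3mem
      rw [hz3diff, inner_add_right, real_inner_smul_right, real_inner_smul_right,
        hv0 (s + r/4) (by nlinarith [hx1.1, hx1.2])] at hh
      linarith
    have h4 : (-(r/4)) * ipf + (-t) * ipe ≤ -(G * t) := by
      have hh := hq (X (s - r/4) 0) hz4mem
      rw [hz4diff, inner_add_right, real_inner_smul_right, real_inner_smul_right,
        hv0 (s - r/4) (by nlinarith [hx1.1, hx1.2])] at hh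
      linarith
    have htqt : t * (ipe - G) ≤ δ * (2*ε) := by
      nlinarith [hx2.1, hx2.2]
    have hipf1 : ipf ≤ 8*ε*δ/r := by
      rw [le_div_iff₀ hr]
      nlinarith [h3, htqt]
    have hipf2 : -(8*ε*δ/r) ≤ ipf := by
      have h7 : -ipf ≤ 8*ε*δ/r := by
        rw [le_div_iff₀ hr]
        nlinarith [h4, htqt]
      linarith
    -- conclude box membership
    have hpf : (⟪f, p - aG⟫ : ℝ) = ipf := by
      rw [haG]
      have hdiff : p - (a + G • e) = (p - a) - G • e := by module
      rw [hdiff, inner_sub_right, real_inner_smul_right, hfe, real_inner_comm]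
      ring
    have hpe : (⟪e, p - aG⟫ : ℝ) = ipe - G := by
      rw [haG]
      have hdiff : p - (a + G • e) = (p - a) - G • e := by module
      rw [hdiff, inner_sub_right, real_inner_smul_right, hee, real_inner_comm]
      ring
    refine ⟨?_, ?_⟩
    · rw [hpf, Set.mem_Icc]; exact ⟨hipf2, hipf1⟩
    · rw [hpe, Set.mem_Icc]; constructor <;> linarith
  have volBoxEq : volume Box = ENNReal.ofReal (16*ε*δ/r) * ENNReal.ofReal (2*ε) := by
    rw [hBox, MR_volBox' f e horth aG _ _ measurableSet_Icc measurableSet_Icc]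
    rw [Real.volume_Icc, Real.volume_Icc]
    congr 2 <;> ring
  -- put everything together
  have key := H Eset hEb hEm
  rw [hEpos, volE] at key
  have key2 : ENNReal.ofReal c * (ENNReal.ofReal (r/2) * ENNReal.ofReal δ)
      ≤ ENNReal.ofReal (16*ε*δ/r) * ENNReal.ofReal (2*ε) :=
    le_trans key (le_trans (measure_mono hsub) volBoxEq.le)
  rw [← ENNReal.ofReal_mul (by positivity), ← ENNReal.ofReal_mul (by positivity),
    ← ENNReal.ofReal_mul (by positivity)] at key2
  rw [ENNReal.ofReal_le_ofReal_iff (by positivity)] at key2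
  -- final arithmetic contradiction
  have hfin : 16*ε*δ/r*(2*ε) = c*r*δ/8 := by
    rw [hε]
    field_simp
    linear_combination 16 * hsq
  rw [hfin] at key2
  nlinarith [mul_pos (mul_pos hc hr) hδ]
end

section
/- Suppose a family of sets {S_x}_{x ∈ D} indexed by a compact set D ⊆ ℝⁿ satisfies: (i) each S_x is open with x ∈ S_x; (ii) an engulfing property: there are 'shrunken' sets S'_x ⊆ S_x with x ∈ S'_x such that whenever S'_x ∩ S'_y ≠ ∅ one has S'_y ⊆ S_x or S'_x ⊆ S_y according to a height comparison h_x ≥ h_y. Then there exists a finite subfamily S_{x_1}, …, S_{x_l} covering D whose shrunken sets S'_{x_1}, …, S'_{x_l} are pairwise disjoint. -/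
/-- Vitali-type covering lemma: given open sets `S x ∋ x` with open shrunken sets
`S' x ⊆ S x` indexed by a compact set `D`, heights `h`, and the engulfing property
(`h y ≤ h x` and `S' x ∩ S' y ≠ ∅` imply `S' y ⊆ S x`), there is a finite subfamily
covering `D` whose shrunken sets are pairwise disjoint. -/
theorem stmt9 (n : ℕ) (D : Set (EuclideanSpace ℝ (Fin n))) (hD : IsCompact D)
    (S S' : EuclideanSpace ℝ (Fin n) → Set (EuclideanSpace ℝ (Fin n)))
    (h : EuclideanSpace ℝ (Fin n) → ℝ)
    (hopen : ∀ x ∈ D, IsOpen (S x)) (hmem : ∀ x ∈ D, x ∈ S x)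
    (hopen' : ∀ x ∈ D, IsOpen (S' x)) (hsub : ∀ x ∈ D, S' x ⊆ S x)
    (hmem' : ∀ x ∈ D, x ∈ S' x) (hpos : ∀ x ∈ D, 0 < h x)
    (heng : ∀ x ∈ D, ∀ y ∈ D, h y ≤ h x → (S' x ∩ S' y).Nonempty → S' y ⊆ S x) :
    ∃ (l : ℕ) (xs : Fin l → EuclideanSpace ℝ (Fin n)),
      (∀ i, xs i ∈ D) ∧ (D ⊆ ⋃ i, S (xs i)) ∧
      (∀ i j, i ≠ j → Disjoint (S' (xs i)) (S' (xs j))) := by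
  classical
  have _ : True := trivial
  -- compactness: finitely many shrunken sets cover D
  obtain ⟨t, htD, htfin, htcov⟩ := hD.elim_finite_subcover_image hopen'
    (fun x hx => Set.mem_biUnion hx (hmem' x hx))
  -- key greedy claim by strong induction on the cardinality
  have key : ∀ N : ℕ, ∀ F : Finset (EuclideanSpace ℝ (Fin n)), F.card ≤ N → ↑F ⊆ D →
      ∃ G : Finset (EuclideanSpace ℝ (Fin n)), G ⊆ F ∧
        (∀ x ∈ G, ∀ y ∈ G, x ≠ y → Disjoint (S' x) (S' y)) ∧
        (⋃ y ∈ F, S' y) ⊆ ⋃ x ∈ G, S x := by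
    intro N
    induction N with
    | zero =>
      intro F hcard _
      have : F = ∅ := Finset.card_eq_zero.mp (Nat.le_zero.mp hcard)
      subst this
      exact ⟨∅, le_rfl, by simp, by simp⟩
    | succ N ih =>
      intro F hcard hFD
      rcases F.eq_empty_or_nonempty with rfl | hne
      · exact ⟨∅, le_rfl, by simp, by simp⟩
      obtain ⟨x, hxF, hxmax⟩ := F.exists_max_image h hne
      have hxD : x ∈ D := hFD hxF
      set F' := F.filter (fun y => Disjoint (S' y) (S' x)) with hF'
      have hxnot : x ∉ F' := by
        simp only [hF', Finset.mem_filter]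
        rintro ⟨-, hd⟩
        exact (hd.ne_of_mem (hmem' x hxD) (hmem' x hxD)) rfl
      have hF'sub : F' ⊆ F := Finset.filter_subset _ _
      have hcard' : F'.card ≤ N := by
        have h1 : F' ⊆ F.erase x := fun y hy =>
          Finset.mem_erase.mpr ⟨fun he => hxnot (he ▸ hy), hF'sub hy⟩
        have h2 := Finset.card_le_card h1
        have h3 := Finset.card_erase_of_mem hxF
        omega
      obtain ⟨G', hG'sub, hG'disj, hG'cov⟩ := ih F' hcard' (fun y hy => hFD (hF'sub hy))
      refine ⟨insert x G', Finset.insert_subset hxF (hG'sub.trans hF'sub), ?_, ?_⟩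
      · intro a ha b hb hab
        rcases Finset.mem_insert.mp ha with rfl | ha' <;>
          rcases Finset.mem_insert.mp hb with rfl | hb'
        · exact absurd rfl hab
        · exact ((Finset.mem_filter.mp (hG'sub hb')).2).symm
        · exact (Finset.mem_filter.mp (hG'sub ha')).2
        · exact hG'disj a ha' b hb' hab
      · intro z hz
        simp only [Set.mem_iUnion] at hz ⊢
        obtain ⟨y, hyF, hzy⟩ := hz
        by_cases hd : Disjoint (S' y) (S' x)
        · have hyF' : y ∈ F' := Finset.mem_filter.mpr ⟨hyF, hd⟩
          have := hG'cov (Set.mem_biUnion hyF' hzy)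
          simp only [Set.mem_iUnion] at this
          obtain ⟨a, haG', hza⟩ := this
          exact ⟨a, Finset.mem_insert_of_mem haG', hza⟩
        · have hyD : y ∈ D := hFD hyF
          have hne' : (S' x ∩ S' y).Nonempty := by
            rw [Set.not_disjoint_iff] at hd
            obtain ⟨w, hw1, hw2⟩ := hd
            exact ⟨w, hw2, hw1⟩
          have := heng x hxD y hyD (hxmax y hyF) hne' hzy
          exact ⟨x, Finset.mem_insert_self _ _, this⟩
  -- apply to the finite subcover
  set F : Finset (EuclideanSpace ℝ (Fin n)) := htfin.toFinset with hFdef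
  have hFD : ↑F ⊆ D := by rwa [hFdef, Set.Finite.coe_toFinset]
  obtain ⟨G, hGF, hGdisj, hGcov⟩ := key F.card F le_rfl hFD
  have hGD : ↑G ⊆ D := fun y hy => hFD (hGF hy)
  refine ⟨G.card, fun i => (G.equivFin.symm i : EuclideanSpace ℝ (Fin n)), ?_, ?_, ?_⟩
  · intro i; exact hGD (G.equivFin.symm i).2
  · intro z hz
    have hz1 : z ∈ ⋃ y ∈ F, S' y := by
      have := htcov hz
      simpa [hFdef, Set.Finite.mem_toFinset] using this
    have hz2 := hGcov hz1
    simp only [Set.mem_iUnion] at hz2 ⊢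
    obtain ⟨a, haG, hza⟩ := hz2
    refine ⟨G.equivFin ⟨a, haG⟩, ?_⟩
    simpa using hza
  · intro i j hij
    apply hGdisj _ (G.equivFin.symm i).2 _ (G.equivFin.symm j).2
    intro he
    apply hij
    have : G.equivFin.symm i = G.equivFin.symm j := Subtype.ext he
    simpa using congrArg G.equivFin this
end

section
/- Let f : Ω → [0,∞) be measurable on a bounded measurable set Ω ⊆ ℝⁿ, and suppose there exist C, ε₀ > 0 and t₀ ≥ 1 such that ∫_{{f ≥ t} ∩ Ω} f ≤ C·t^{-ε₀} for all t ≥ t₀. Then f ∈ L^{1+ε}(Ω) for every ε ∈ (0, ε₀), with ∫_Ω f^{1+ε} ≤ C_ε·(t₀^{ε-ε₀} + t₀^{1+ε}·|Ω|) for a constant C_ε depending on C, ε, ε₀. -/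
open MeasureTheory

/-- If `f ≥ 0` on a bounded measurable `Ω ⊆ ℝⁿ` and
`∫_{{f ≥ t} ∩ Ω} f ≤ C·t^{-ε₀}` for `t ≥ t₀`, then `f ∈ L^{1+ε}(Ω)` for every
`ε ∈ (0, ε₀)` with `∫_Ω f^{1+ε} ≤ C_ε·(t₀^{ε-ε₀} + t₀^{1+ε}·|Ω|)`. -/
theorem stmt11 (n : ℕ) (Ω : Set (EuclideanSpace ℝ (Fin n))) (hΩm : MeasurableSet Ω)
    (hΩb : Bornology.IsBounded Ω) (f : EuclideanSpace ℝ (Fin n) → ℝ)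
    (hf : Measurable f) (hf0 : ∀ x ∈ Ω, 0 ≤ f x)
    (C ε₀ t₀ : ℝ) (hC : 0 < C) (hε₀ : 0 < ε₀) (ht₀ : 1 ≤ t₀)
    (hdecay : ∀ t ≥ t₀, (∫⁻ x in {x ∈ Ω | t ≤ f x}, ENNReal.ofReal (f x)) ≤
      ENNReal.ofReal (C * t ^ (-ε₀)))
    (ε : ℝ) (hε : ε ∈ Set.Ioo 0 ε₀) :
    ∃ Cε > 0, (∫⁻ x in Ω, ENNReal.ofReal (f x ^ (1 + ε))) ≤
      ENNReal.ofReal (Cε * (t₀ ^ (ε - ε₀) + t₀ ^ (1 + ε) * (volume Ω).toReal)) := by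
  classical
  obtain ⟨hε0, hεlt⟩ := hε
  have ht₀0 : (0:ℝ) < t₀ := lt_of_lt_of_le one_pos ht₀
  have hΩvol : volume Ω ≠ ⊤ := hΩb.measure_lt_top.ne
  set r : ℝ := (2:ℝ) ^ (ε - ε₀) with hrdef
  have hr0 : 0 < r := Real.rpow_pos_of_pos two_pos _
  have hr1 : r < 1 := Real.rpow_lt_one_of_one_lt_of_neg one_lt_two (by linarith)
  have h1r : (0:ℝ) < 1 - r := by linarith
  have h2e : (0:ℝ) < (2:ℝ) ^ ε := Real.rpow_pos_of_pos two_pos _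
  set D : ℝ := C * 2 ^ ε / (1 - r) with hDdef
  have hD0 : 0 < D := by positivity
  refine ⟨D + 1, by linarith, ?_⟩
  set Ω₁ : Set (EuclideanSpace ℝ (Fin n)) := {x ∈ Ω | f x < t₀} with hΩ₁def
  set A : ℕ → Set (EuclideanSpace ℝ (Fin n)) :=
    fun k => {x ∈ Ω | 2 ^ k * t₀ ≤ f x ∧ f x < 2 ^ (k+1) * t₀} with hAdef
  -- covering
  have hcover : Ω ⊆ Ω₁ ∪ ⋃ k, A k := by
    intro x hx
    by_cases h : f x < t₀
    · exact Or.inl ⟨hx, h⟩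
    · push_neg at h
      right
      have hy : (1:ℝ) ≤ f x / t₀ := (one_le_div ht₀0).mpr h
      have hex : ∃ k : ℕ, f x / t₀ < 2 ^ (k+1) := by
        obtain ⟨m, hm⟩ := pow_unbounded_of_one_lt (f x / t₀) one_lt_two
        exact ⟨m, hm.trans_le (pow_le_pow_right₀ one_le_two (Nat.le_succ m))⟩
      set k := Nat.find hex with hkdef
      have hk2 : f x / t₀ < 2 ^ (k+1) := Nat.find_spec hex
      have hk1 : (2:ℝ) ^ k ≤ f x / t₀ := by
        rcases Nat.eq_zero_or_pos k with h0 | h0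
        · simpa [h0] using hy
        · have hm := Nat.find_min hex (show k - 1 < k from Nat.sub_lt h0 one_pos)
          push_neg at hm
          have : k - 1 + 1 = k := Nat.succ_pred_eq_of_pos h0
          rwa [this] at hm
      exact Set.mem_iUnion.mpr ⟨k, hx, (le_div_iff₀ ht₀0).mp hk1, (div_lt_iff₀ ht₀0).mp hk2⟩
  -- bound on Ω₁
  have h1 : ∫⁻ x in Ω₁, ENNReal.ofReal (f x ^ (1+ε)) ≤
      ENNReal.ofReal (t₀ ^ (1+ε) * (volume Ω).toReal) := by
    have hb : ∫⁻ x in Ω₁, ENNReal.ofReal (f x ^ (1+ε)) ≤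
        ∫⁻ _ in Ω₁, ENNReal.ofReal (t₀ ^ (1+ε)) := by
      refine setLIntegral_mono measurable_const fun x hx => ?_
      exact ENNReal.ofReal_le_ofReal
        (Real.rpow_le_rpow (hf0 x hx.1) hx.2.le (by linarith))
    calc ∫⁻ x in Ω₁, ENNReal.ofReal (f x ^ (1+ε))
        ≤ ENNReal.ofReal (t₀ ^ (1+ε)) * volume Ω₁ := by rwa [setLIntegral_const] at hb
      _ ≤ ENNReal.ofReal (t₀ ^ (1+ε)) * volume Ω := by
          exact mul_le_mul_right (measure_mono (Set.sep_subset _ _)) _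
      _ = ENNReal.ofReal (t₀ ^ (1+ε) * (volume Ω).toReal) := by
          rw [ENNReal.ofReal_mul (by positivity), ENNReal.ofReal_toReal hΩvol]
  -- per-annulus bound
  have hAk : ∀ k : ℕ, ∫⁻ x in A k, ENNReal.ofReal (f x ^ (1+ε)) ≤
      ENNReal.ofReal ((C * 2 ^ ε * t₀ ^ (ε - ε₀)) * r ^ k) := by
    intro k
    have h2k1 : (0:ℝ) < 2 ^ k := by positivity
    have hkt : t₀ ≤ 2 ^ k * t₀ := le_mul_of_one_le_left ht₀0.le (one_le_pow₀ one_le_two)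
    have hsub : A k ⊆ {x ∈ Ω | 2 ^ k * t₀ ≤ f x} := fun x hx => ⟨hx.1, hx.2.1⟩
    calc ∫⁻ x in A k, ENNReal.ofReal (f x ^ (1+ε))
        ≤ ∫⁻ x in A k, ENNReal.ofReal ((2 ^ (k+1) * t₀) ^ ε) * ENNReal.ofReal (f x) := by
          refine setLIntegral_mono (by fun_prop) fun x hx => ?_
          obtain ⟨hxΩ, hx1, hx2⟩ := hx
          have hfx : 0 < f x := lt_of_lt_of_le (by positivity) hx1
          rw [← ENNReal.ofReal_mul (by positivity)]
          refine ENNReal.ofReal_le_ofReal ?_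
          have hsplit : f x ^ (1+ε) = f x ^ ε * f x := by
            rw [Real.rpow_add hfx, Real.rpow_one]; ring
          rw [hsplit]
          exact mul_le_mul_of_nonneg_right
            (Real.rpow_le_rpow hfx.le hx2.le hε0.le) hfx.le
      _ = ENNReal.ofReal ((2 ^ (k+1) * t₀) ^ ε) * ∫⁻ x in A k, ENNReal.ofReal (f x) :=
          lintegral_const_mul _ hf.ennreal_ofReal
      _ ≤ ENNReal.ofReal ((2 ^ (k+1) * t₀) ^ ε) * ENNReal.ofReal (C * (2 ^ k * t₀) ^ (-ε₀)) := by
          gcongr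
          exact (lintegral_mono_set hsub).trans (hdecay _ hkt)
      _ = ENNReal.ofReal ((2 ^ (k+1) * t₀) ^ ε * (C * (2 ^ k * t₀) ^ (-ε₀))) :=
          (ENNReal.ofReal_mul (by positivity)).symm
      _ = ENNReal.ofReal ((C * 2 ^ ε * t₀ ^ (ε - ε₀)) * r ^ k) := by
          congr 1
          have e2 : ((2:ℝ) ^ (k+1) * t₀) ^ ε = 2 ^ (((k:ℝ)+1)*ε) * t₀ ^ ε := by
            have hc : ((k+1 : ℕ) : ℝ) = (k:ℝ)+1 := by push_cast; ring
            rw [Real.mul_rpow (by positivity) ht₀0.le, ← Real.rpow_natCast 2 (k+1),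
              ← Real.rpow_mul (by norm_num), hc]
          have e3 : ((2:ℝ) ^ k * t₀) ^ (-ε₀) = 2 ^ ((k:ℝ)*(-ε₀)) * t₀ ^ (-ε₀) := by
            rw [Real.mul_rpow (by positivity) ht₀0.le, ← Real.rpow_natCast 2 k,
              ← Real.rpow_mul (by norm_num)]
          have e4 : r ^ k = (2:ℝ) ^ ((ε - ε₀) * (k:ℝ)) := by
            rw [hrdef, ← Real.rpow_natCast ((2:ℝ) ^ (ε - ε₀)) k,
              ← Real.rpow_mul (by norm_num)]
          have e5 : (2:ℝ) ^ (((k:ℝ)+1)*ε) * 2 ^ ((k:ℝ)*(-ε₀)) =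
              2 ^ ε * 2 ^ ((ε - ε₀) * (k:ℝ)) := by
            rw [← Real.rpow_add two_pos, ← Real.rpow_add two_pos]
            congr 1
            ring
          have e6 : t₀ ^ ε * t₀ ^ (-ε₀) = t₀ ^ (ε - ε₀) := by
            rw [show ε - ε₀ = ε + (-ε₀) by ring, Real.rpow_add ht₀0]
          calc ((2:ℝ) ^ (k+1) * t₀) ^ ε * (C * (2 ^ k * t₀) ^ (-ε₀))
              = ((2:ℝ) ^ (((k:ℝ)+1)*ε) * 2 ^ ((k:ℝ)*(-ε₀))) * (t₀ ^ ε * t₀ ^ (-ε₀)) * C := by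
                rw [e2, e3]; ring
            _ = (2 ^ ε * 2 ^ ((ε - ε₀) * (k:ℝ))) * t₀ ^ (ε - ε₀) * C := by rw [e5, e6]
            _ = (C * 2 ^ ε * t₀ ^ (ε - ε₀)) * r ^ k := by rw [e4]; ring
  -- bound on the union
  have h2 : ∫⁻ x in ⋃ k, A k, ENNReal.ofReal (f x ^ (1+ε)) ≤
      ENNReal.ofReal (D * t₀ ^ (ε - ε₀)) := by
    calc ∫⁻ x in ⋃ k, A k, ENNReal.ofReal (f x ^ (1+ε))
        ≤ ∑' k, ∫⁻ x in A k, ENNReal.ofReal (f x ^ (1+ε)) := lintegral_iUnion_le _ _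
      _ ≤ ∑' k, ENNReal.ofReal ((C * 2 ^ ε * t₀ ^ (ε - ε₀)) * r ^ k) :=
          ENNReal.tsum_le_tsum hAk
      _ = ENNReal.ofReal (∑' k, (C * 2 ^ ε * t₀ ^ (ε - ε₀)) * r ^ k) :=
          (ENNReal.ofReal_tsum_of_nonneg (fun k => by positivity)
            ((summable_geometric_of_lt_one hr0.le hr1).mul_left _)).symm
      _ = ENNReal.ofReal (D * t₀ ^ (ε - ε₀)) := by
          rw [tsum_mul_left, tsum_geometric_of_lt_one hr0.le hr1, hDdef]
          congr 1
          field_simp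
  -- put everything together
  have hV : 0 ≤ (volume Ω).toReal := ENNReal.toReal_nonneg
  have ha : (0:ℝ) < t₀ ^ (ε - ε₀) := Real.rpow_pos_of_pos ht₀0 _
  have hb' : (0:ℝ) < t₀ ^ (1+ε) := Real.rpow_pos_of_pos ht₀0 _
  calc ∫⁻ x in Ω, ENNReal.ofReal (f x ^ (1+ε))
      ≤ ∫⁻ x in Ω₁ ∪ ⋃ k, A k, ENNReal.ofReal (f x ^ (1+ε)) := lintegral_mono_set hcover
    _ ≤ (∫⁻ x in Ω₁, ENNReal.ofReal (f x ^ (1+ε))) +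
        ∫⁻ x in ⋃ k, A k, ENNReal.ofReal (f x ^ (1+ε)) := lintegral_union_le _ _ _
    _ ≤ ENNReal.ofReal (t₀ ^ (1+ε) * (volume Ω).toReal) +
        ENNReal.ofReal (D * t₀ ^ (ε - ε₀)) := add_le_add h1 h2
    _ = ENNReal.ofReal (t₀ ^ (1+ε) * (volume Ω).toReal + D * t₀ ^ (ε - ε₀)) :=
        (ENNReal.ofReal_add (by positivity) (by positivity)).symm
    _ ≤ ENNReal.ofReal ((D + 1) * (t₀ ^ (ε - ε₀) + t₀ ^ (1+ε) * (volume Ω).toReal)) := by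
        refine ENNReal.ofReal_le_ofReal ?_
        nlinarith [mul_nonneg (mul_nonneg hD0.le hb'.le) hV]
end

section
/- Let S ⊆ ℝⁿ be a bounded open convex set that is balanced about a point x₀ ∈ S with constant c (x ∈ S ⟹ x₀ - c(x - x₀) ∈ S), and let u be convex on S̄ with u = 0 on ∂S, u(x₀) = -h < 0. Then inf_S u ≥ -h/ρ for ρ := c/(1+c); i.e. sup_S |u| ≤ (1 + 1/c)·h, so the minimum depth of u over S is comparable to its depth at the balanced center x₀. -/
/-- A ray from an interior point of a bounded open set hits the frontier. -/
lemma ray_hits_frontier {E : Type*} [NormedAddCommGroup E] [NormedSpace ℝ E]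
    (S : Set E) (hS : IsOpen S) (hSb : Bornology.IsBounded S)
    (p : E) (hp : p ∈ S) (d : E) (hd : d ≠ 0) :
    ∃ t : ℝ, 0 < t ∧ p + t • d ∈ frontier S := by
  set A : Set ℝ := {t : ℝ | 0 ≤ t ∧ p + t • d ∈ closure S} with hA
  have hne : (0 : ℝ) ∈ A := ⟨le_refl 0, by simpa using subset_closure hp⟩
  obtain ⟨R, hR⟩ := (hSb.closure).subset_closedBall 0
  have hdn : 0 < ‖d‖ := norm_pos_iff.mpr hd
  have hbdd : BddAbove A := by
    refine ⟨(R + ‖p‖) / ‖d‖, fun t ht => ?_⟩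
    have h1 : ‖p + t • d‖ ≤ R := by simpa using hR ht.2
    have h2 : ‖t • d‖ ≤ R + ‖p‖ := by
      calc ‖t • d‖ = ‖p + t • d - p‖ := by rw [add_sub_cancel_left]
        _ ≤ ‖p + t • d‖ + ‖p‖ := norm_sub_le _ _
        _ ≤ R + ‖p‖ := by linarith
    rw [norm_smul, Real.norm_eq_abs] at h2
    rw [le_div_iff₀ hdn]
    calc t * ‖d‖ ≤ |t| * ‖d‖ := by
          gcongr; exact le_abs_self t
      _ ≤ R + ‖p‖ := h2
  have hclosed : IsClosed A := by
    have : A = {t : ℝ | 0 ≤ t} ∩ (fun t : ℝ => p + t • d) ⁻¹' (closure S) := rfl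
    rw [this]
    exact (isClosed_Ici.preimage continuous_id).inter
      (isClosed_closure.preimage (by continuity))
  set T := sSup A with hT
  have hTA : T ∈ A := hclosed.csSup_mem ⟨0, hne⟩ hbdd
  -- T is positive
  obtain ⟨ε, hε, hball⟩ := Metric.isOpen_iff.mp hS p hp
  have hδ : (ε / (2 * ‖d‖)) ∈ A := by
    constructor
    · positivity
    · apply subset_closure
      apply hball
      rw [Metric.mem_ball, dist_eq_norm]
      have : ‖p + (ε / (2 * ‖d‖)) • d - p‖ = (ε / (2 * ‖d‖)) * ‖d‖ := by
        rw [show p + (ε / (2 * ‖d‖)) • d - p = (ε / (2 * ‖d‖)) • d by abel,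
          norm_smul, Real.norm_eq_abs, abs_of_pos (by positivity)]
      rw [this, div_mul_eq_mul_div, div_lt_iff₀ (by positivity)]
      nlinarith [hdn, hε]
  have hTpos : 0 < T := lt_of_lt_of_le (by positivity) (le_csSup hbdd hδ)
  refine ⟨T, hTpos, ?_⟩
  rw [hS.frontier_eq]
  refine ⟨hTA.2, fun hmem => ?_⟩
  obtain ⟨ε, hε, hball⟩ := Metric.isOpen_iff.mp hS _ hmem
  have hδ' : (T + ε / (2 * ‖d‖)) ∈ A := by
    constructor
    · have : (0:ℝ) < ε / (2 * ‖d‖) := by positivity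
      linarith
    · apply subset_closure
      apply hball
      rw [Metric.mem_ball, dist_eq_norm]
      have : p + (T + ε / (2 * ‖d‖)) • d - (p + T • d) = (ε / (2 * ‖d‖)) • d := by
        rw [add_smul]; abel
      rw [this, norm_smul, Real.norm_eq_abs, abs_of_pos (by positivity)]
      rw [div_mul_eq_mul_div, div_lt_iff₀ (by positivity)]
      nlinarith [hdn, hε]
  have h1 := le_csSup hbdd hδ'
  have h2 : (0:ℝ) < ε / (2 * ‖d‖) := by positivity
  linarith

/-- A convex function vanishing on the frontier of a bounded open set is nonpositive inside. -/
lemma convex_nonpos_inside {E : Type*} [NormedAddCommGroup E] [NormedSpace ℝ E]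
    (S : Set E) (hS : IsOpen S) (hSb : Bornology.IsBounded S)
    (u : E → ℝ) (hu : ConvexOn ℝ (closure S) u)
    (hbdry : ∀ x ∈ frontier S, u x = 0)
    (y : E) (hy : y ∈ S) (d : E) (hd : d ≠ 0) : u y ≤ 0 := by
  obtain ⟨t₁, ht₁, hz₁⟩ := ray_hits_frontier S hS hSb y hy d hd
  obtain ⟨t₂, ht₂, hz₂⟩ := ray_hits_frontier S hS hSb y hy (-d) (neg_ne_zero.mpr hd)
  set z₁ := y + t₁ • d
  set z₂ := y + t₂ • (-d)
  have hne : t₁ + t₂ ≠ 0 := by positivity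
  have ha : (0:ℝ) ≤ t₂ / (t₁ + t₂) := by positivity
  have hb : (0:ℝ) ≤ t₁ / (t₁ + t₂) := by positivity
  have hab : t₂ / (t₁ + t₂) + t₁ / (t₁ + t₂) = 1 := by
    field_simp
    ring
  have hcomb : (t₂ / (t₁ + t₂)) • z₁ + (t₁ / (t₁ + t₂)) • z₂ = y := by
    simp only [z₁, z₂]
    match_scalars <;> field_simp [hne] <;> ring
  have hc1 : z₁ ∈ closure S := frontier_subset_closure hz₁
  have hc2 : z₂ ∈ closure S := frontier_subset_closure hz₂
  have := hu.2 hc1 hc2 ha hb hab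
  rw [hcomb, hbdry _ hz₁, hbdry _ hz₂] at this
  simpa using this

/-- If `S ⊆ ℝⁿ` is bounded open convex, balanced about `x₀ ∈ S` with constant `c`,
and `u` is convex continuous on `S̄` with `u = 0` on `∂S` and `u x₀ = -h < 0`, then
`inf_S u ≥ -(1 + 1/c)·h`. -/
theorem stmt19 (n : ℕ) (S : Set (EuclideanSpace ℝ (Fin n))) (hS : IsOpen S)
    (hconvS : Convex ℝ S) (hSb : Bornology.IsBounded S)
    (x₀ : EuclideanSpace ℝ (Fin n)) (hx₀ : x₀ ∈ S) (c : ℝ) (hc : 0 < c)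
    (hbal : ∀ x ∈ S, x₀ - c • (x - x₀) ∈ S)
    (u : EuclideanSpace ℝ (Fin n) → ℝ) (hu : ConvexOn ℝ (closure S) u)
    (hcont : ContinuousOn u (closure S))
    (hbdry : ∀ x ∈ frontier S, u x = 0)
    (h : ℝ) (hh : 0 < h) (hux₀ : u x₀ = -h) :
    ∀ x ∈ S, -((1 + 1 / c) * h) ≤ u x := by
  intro x hx
  by_cases hxx : x = x₀
  · subst hxx
    rw [hux₀]
    have : 0 < 1 / c := by positivity
    nlinarith
  · set y := x₀ - c • (x - x₀) with hy
    have hyS : y ∈ S := hbal x hx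
    have hd : x - x₀ ≠ 0 := sub_ne_zero.mpr hxx
    have huy : u y ≤ 0 := convex_nonpos_inside S hS hSb u hu hbdry y hyS _ hd
    have h1c : (0:ℝ) < 1 + c := by linarith
    have h1c' : (1:ℝ) + c ≠ 0 := ne_of_gt h1c
    have ha : (0:ℝ) ≤ c / (1 + c) := by positivity
    have hb : (0:ℝ) ≤ 1 / (1 + c) := by positivity
    have hab : c / (1 + c) + 1 / (1 + c) = 1 := by field_simp; ring
    have hcomb : (c / (1 + c)) • x + (1 / (1 + c)) • y = x₀ := by
      rw [hy]
      match_scalars <;> field_simp [h1c'] <;> ring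
    have hxc : x ∈ closure S := subset_closure hx
    have hyc : y ∈ closure S := subset_closure hyS
    have hconv := hu.2 hxc hyc ha hb hab
    rw [hcomb, hux₀] at hconv
    simp only [smul_eq_mul] at hconv
    have hkey : -h ≤ (c / (1 + c)) * u x := by
      have : (1 / (1 + c)) * u y ≤ 0 := mul_nonpos_of_nonneg_of_nonpos hb huy
      linarith
    rw [div_mul_eq_mul_div, le_div_iff₀ h1c] at hkey
    have h2 : (1 + 1 / c) * h * c = h * (1 + c) := by field_simp; ring
    nlinarith [hkey, hc, hh, h2]
end
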